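/- The cyclic sums of the two structural tensors satisfy 𝔖_{x,y,z} F̃(x,y,z) = 𝔖_{x,y,z} F(Jx,y,z), where 𝔖 denotes cyclic summation over x,y,z. Consequently, (M,J,g̃) is quasi-Kählerian (𝔖 F̃ = 0) if and only if (M,J,g) is quasi-Kählerian (𝔖 F = 0). -/
import Mathlib

/-- 𝔖_{x,y,z} F̃(x,y,z) = 𝔖_{x,y,z} F(Jx,y,z); consequently (M,J,g̃) is quasi-Kählerian
(𝔖 F̃ = 0) if and only if (M,J,g) is quasi-Kählerian (𝔖 F = 0). -/
theorem stmt_5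
    {R : Type*} [CommRing R] [Algebra ℝ R]
    {V : Type*} [AddCommGroup V] [Module R V]
    (D : V → R → R) (bracket : V → V → V)
    (g : V → V → R) (J : V →ₗ[R] V) (nabla : V → V → V)
    -- `g` is a symmetric bilinear Norden metric, `J` an almost complex structure
    (hg_addl : ∀ x y z, g (x + y) z = g x z + g y z)
    (hg_smull : ∀ (f : R) (x z : V), g (f • x) z = f * g x z)
    (hg_sym : ∀ x y, g x y = g y x)
    (hJJ : ∀ x, J (J x) = -x)
    (hNorden : ∀ x y, g (J x) (J y) = - g x y)
    -- `nabla` is the Levi-Civita connection of `g`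
    (h_add1 : ∀ x y z, nabla (x + y) z = nabla x z + nabla y z)
    (h_smul1 : ∀ (f : R) (x z : V), nabla (f • x) z = f • nabla x z)
    (h_add2 : ∀ x y z, nabla x (y + z) = nabla x y + nabla x z)
    (h_leib : ∀ (x : V) (f : R) (y : V), nabla x (f • y) = D x f • y + f • nabla x y)
    (h_tor : ∀ x y, nabla x y - nabla y x = bracket x y)
    (h_metric : ∀ x y z, D x (g y z) = g (nabla x y) z + g y (nabla x z))
    -- the structural tensor `F(X,Y,Z) = g((∇_X J)Y, Z)`
    (F : V → V → V → R)
    (hF : ∀ x y z, F x y z = g (nabla x (J y) - J (nabla x y)) z)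
    -- the associated Norden metric `g̃(X,Y) = g(X,JY)` and its Levi-Civita connection
    (gt : V → V → R) (hgt : ∀ x y, gt x y = g x (J y))
    (nabla' : V → V → V)
    (h'_add1 : ∀ x y z, nabla' (x + y) z = nabla' x z + nabla' y z)
    (h'_smul1 : ∀ (f : R) (x z : V), nabla' (f • x) z = f • nabla' x z)
    (h'_add2 : ∀ x y z, nabla' x (y + z) = nabla' x y + nabla' x z)
    (h'_leib : ∀ (x : V) (f : R) (y : V), nabla' x (f • y) = D x f • y + f • nabla' x y)
    (h'_tor : ∀ x y, nabla' x y - nabla' y x = bracket x y)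
    (h'_metric : ∀ x y z, D x (gt y z) = gt (nabla' x y) z + gt y (nabla' x z))
    (Ft : V → V → V → R)
    (hFt : ∀ x y z, Ft x y z = gt (nabla' x (J y) - J (nabla' x y)) z) :
    (∀ x y z, Ft x y z + Ft y z x + Ft z x y
        = F (J x) y z + F (J y) z x + F (J z) x y) ∧
    ((∀ x y z, Ft x y z + Ft y z x + Ft z x y = 0) ↔
      (∀ x y z, F x y z + F y z x + F z x y = 0)) := by
  -- basic linearity facts
  have gneg1 : ∀ a b : V, g (-a) b = -g a b := by
    intro a b
    rw [← neg_one_smul R a, hg_smull]; ring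
  have gneg2 : ∀ a b : V, g a (-b) = -g a b := by
    intro a b
    rw [hg_sym, gneg1, hg_sym]
  have hg_sub : ∀ a b c : V, g (a - b) c = g a c - g b c := by
    intro a b c
    rw [sub_eq_add_neg, hg_addl, gneg1]; ring
  have hgJ : ∀ a b : V, g (J a) b = g a (J b) := by
    intro a b
    have hb : b = -J (J b) := by rw [hJJ, neg_neg]
    calc g (J a) b = g (J a) (-J (J b)) := by rw [← hb]
      _ = -g (J a) (J (J b)) := gneg2 _ _
      _ = g a (J b) := by rw [hNorden]; ring
  have n0 : ∀ a : V, nabla a 0 = 0 := by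
    intro a
    have h := h_add2 a 0 0
    rw [add_zero] at h
    exact (left_eq_add.mp h)
  have nneg : ∀ a b : V, nabla a (-b) = -nabla a b := by
    intro a b
    have h := h_add2 a b (-b)
    rw [add_neg_cancel, n0] at h
    exact (eq_neg_of_add_eq_zero_right h.symm)
  have n'0 : ∀ a : V, nabla' a 0 = 0 := by
    intro a
    have h := h'_add2 a 0 0
    rw [add_zero] at h
    exact (left_eq_add.mp h)
  have n'neg : ∀ a b : V, nabla' a (-b) = -nabla' a b := by
    intro a b
    have h := h'_add2 a b (-b)
    rw [add_neg_cancel, n'0] at h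
    exact (eq_neg_of_add_eq_zero_right h.symm)
  have nneg1 : ∀ a b : V, nabla (-a) b = -nabla a b := by
    intro a b
    rw [← neg_one_smul R a, h_smul1, neg_one_smul]
  -- expansions of the structural tensors
  have hF_exp : ∀ a b c, F a b c = g (nabla a (J b)) c - g (nabla a b) (J c) := by
    intro a b c
    rw [hF, hg_sub, hgJ]
  have hFt_exp : ∀ a b c, Ft a b c = g (nabla' a (J b)) (J c) + g (nabla' a b) c := by
    intro a b c
    rw [hFt, hgt, hg_sub, hNorden]; ring
  have hFJJ : ∀ a b c, F a (J b) (J c) = F a b c := by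
    intro a b c
    rw [hF_exp, hF_exp, hJJ, hJJ, nneg, gneg1, gneg2]; ring
  have Fneg1 : ∀ a b c, F (-a) b c = -F a b c := by
    intro a b c
    rw [hF_exp, hF_exp, nneg1, nneg1, gneg1, gneg1]; ring
  -- combined torsion relation
  have TCrel : ∀ a b c : V, g (nabla a b) c - g (nabla b a) c
      = g (nabla' a b) c - g (nabla' b a) c := by
    intro a b c
    rw [← hg_sub, ← hg_sub, h_tor, h'_tor]
  -- metric bridge relation
  have Rrel : ∀ u v w : V, g (nabla u v) (J w) + g (nabla u (J w)) v
      = g (nabla' u v) (J w) + g (nabla' u w) (J v) := by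
    intro u v w
    have h1 := h_metric u v (J w)
    have h2 := h'_metric u v w
    rw [hgt, hgt, hgt] at h2
    have e1 : g v (nabla u (J w)) = g (nabla u (J w)) v := hg_sym _ _
    have e2 : g v (J (nabla' u w)) = g (nabla' u w) (J v) := by
      rw [← hgJ, hg_sym]
    linear_combination h2 - h1 - e1 + e2
  -- main identity
  have main : ∀ x y z, Ft x y z + Ft y z x + Ft z x y
      = F (J x) y z + F (J y) z x + F (J z) x y := by
    intro x y z
    simp only [hFt_exp, hF_exp]
    have t1 := TCrel x (J y) (J z)
    have t2 := TCrel x (J z) (J y)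
    have t3 := TCrel (J x) y (J z)
    have t4 := TCrel (J x) z (J y)
    have t5 := TCrel y (J z) (J x)
    have t6 := TCrel (J y) z (J x)
    have r1 := Rrel x y (J z)
    have r2 := Rrel x (J y) z
    have r3 := Rrel x z (J y)
    have r4 := Rrel (J x) z y
    have r5 := Rrel y (J x) z
    have r6 := Rrel (J y) x z
    have r7 := Rrel z x (J y)
    have r8 := Rrel z (J x) y
    have r9 := Rrel z y (J x)
    have r10 := Rrel (J z) y x
    simp only [hJJ, nneg, n'neg, gneg1, gneg2] at r1 r2 r3 r4 r5 r6 r7 r8 r9 r10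
    linear_combination (-1 : R) * t1 - t2 + t3 + t4 - t5 + t6
      + r1 + r2 - r3 - r4 + r5 - r6 + r7 + r8 - r9 - r10
  refine ⟨main, ?_, ?_⟩
  · intro h x y z
    have e := main (J x) (J y) (J z)
    rw [h (J x) (J y) (J z)] at e
    simp only [hFJJ, hJJ, Fneg1] at e
    linear_combination e
  · intro h x y z
    rw [main x y z]
    have e := h (J x) (J y) (J z)
    simp only [hFJJ] at e
    exact e
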